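/- In any k-closure graph cl_k(D) of a DAG D, two nodes a and b are non-adjacent if and only if there exists some set S of nodes such that a and b are d-separated given S in cl_k(D). -/

import Mathlib

/-- A mixed graph: directed edges `dir` and bidirected edges `bi`. -/
structure MixedGraph (V : Type) where
  dir : V → V → Prop
  bi : V → V → Prop

namespace MixedGraph

variable {V : Type} (G : MixedGraph V)

/-- symmetric view of bidirected adjacency -/
def biAdj (a b : V) : Prop := G.bi a b ∨ G.bi b a

/-- `step G u v hu hv` : an edge between `u` and `v` with arrowhead-at-`u` = `hu`
and arrowhead-at-`v` = `hv`. -/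
def step (u v : V) (hu hv : Bool) : Prop :=
  (hu = false ∧ hv = true ∧ G.dir u v) ∨
  (hu = true ∧ hv = false ∧ G.dir v u) ∨
  (hu = true ∧ hv = true ∧ G.biAdj u v)

/-- Walks in a mixed graph, recording the arrowhead marks of each traversed edge. -/
inductive Walk : V → V → Type _
  | nil (v : V) : Walk v v
  | cons {u v w : V} (hu hv : Bool) (h : G.step u v hu hv) (p : Walk v w) : Walk u w

variable {G}

def Walk.support : ∀ {a b : V}, G.Walk a b → List V
  | _, _, .nil v => [v]
  | _, _, .cons (u := u) _ _ _ p => u :: p.support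

/-- List of internal vertices together with the two arrowhead marks adjacent to them
(incoming mark, outgoing mark): a vertex is a collider iff both are `true`. -/
def Walk.marksInternal : ∀ {a b : V}, G.Walk a b → List (V × Bool × Bool)
  | _, _, .nil _ => []
  | _, _, .cons _ hv _ q =>
    match q with
    | .nil _ => []
    | .cons (u := m) hu' _ _ _ => (m, hv, hu') :: q.marksInternal

/-- The arrowhead mark at the first vertex of a walk (if nonempty). -/
def Walk.firstHead : ∀ {a b : V}, G.Walk a b → Option Bool
  | _, _, .nil _ => none
  | _, _, .cons hu _ _ _ => some hu

/-- The arrowhead mark at the last vertex of a walk (if nonempty). -/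
def Walk.lastHead : ∀ {a b : V}, G.Walk a b → Option Bool
  | _, _, .nil _ => none
  | _, _, .cons _ hv _ q =>
    match q with
    | .nil _ => some hv
    | .cons _ _ _ _ => q.lastHead

variable (G)

/-- Ancestorship in a mixed graph: directed edges only (reflexive). -/
def Anc (a b : V) : Prop := Relation.ReflTransGen G.dir a b

variable {G}

/-- A walk is d-connecting given `c` iff every collider on it is an ancestor of some
node of `c` and every non-collider is not in `c`. -/
def Walk.DConnecting (c : Set V) {a b : V} (w : G.Walk a b) : Prop :=
  ∀ m ∈ w.marksInternal,
    ((m.2.1 = true ∧ m.2.2 = true) → ∃ x ∈ c, G.Anc m.1 x) ∧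
    (¬ (m.2.1 = true ∧ m.2.2 = true) → m.1 ∉ c)

/-- A walk is active given `c` iff every collider on it is in `c` and every
non-collider is not in `c`. -/
def Walk.Active (c : Set V) {a b : V} (w : G.Walk a b) : Prop :=
  ∀ m ∈ w.marksInternal,
    ((m.2.1 = true ∧ m.2.2 = true) → m.1 ∈ c) ∧
    (¬ (m.2.1 = true ∧ m.2.2 = true) → m.1 ∉ c)

/-- A path is a walk without repeated vertices. -/
def Walk.IsPath {a b : V} (w : G.Walk a b) : Prop := w.support.Nodup

variable (G)

/-- d-connection: existence of a d-connecting path. -/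
def DConn (c : Set V) (a b : V) : Prop :=
  ∃ w : G.Walk a b, w.IsPath ∧ w.DConnecting c

/-- d-separation (m-separation in mixed graphs). -/
def DSep (c : Set V) (a b : V) : Prop := ¬ G.DConn c a b

/-- Adjacency in a mixed graph. -/
def Adj (a b : V) : Prop := G.dir a b ∨ G.dir b a ∨ G.biAdj a b

end MixedGraph

/-- View a directed graph as a mixed graph with no bidirected edges. -/
def ofDAG {V : Type} (E : V → V → Prop) : MixedGraph V := ⟨E, fun _ _ => False⟩

/-- Acyclicity of a directed graph. -/
def Acyclic {V : Type} (E : V → V → Prop) : Prop := ∀ a, ¬ Relation.TransGen E a a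

/-- `a, b` are `k`-covered in `E`: no conditioning set of size at most `k` d-separates them. -/
def KCovered {V : Type} (E : V → V → Prop) (k : ℕ) (a b : V) : Prop :=
  ∀ c : Finset V, c.card ≤ k → ¬ (ofDAG E).DSep (↑c) a b

/-- The `k`-closure of a DAG: every `k`-covered pair is adjacent, oriented by
ancestrality in `E`, bidirected when neither endpoint is an ancestor of the other. -/
def kClosure {V : Type} (E : V → V → Prop) (k : ℕ) : MixedGraph V where
  dir a b := KCovered E k a b ∧ Relation.TransGen E a b
  bi a b := KCovered E k a b ∧ KCovered E k b a ∧
    ¬ Relation.ReflTransGen E a b ∧ ¬ Relation.ReflTransGen E b a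

/-- Maximal ancestral graph: no directed cycles, no almost directed cycles,
and every non-adjacent pair of distinct nodes is d-separable. -/
def IsMAG {V : Type} (G : MixedGraph V) : Prop :=
  (∀ a, ¬ Relation.TransGen G.dir a a) ∧
  (∀ a b, Relation.TransGen G.dir a b → ¬ G.biAdj a b) ∧
  (∀ a b, a ≠ b → ¬ G.Adj a b → ∃ S : Set V, G.DSep S a b)

/-- k-Markov equivalence of two directed graphs. -/
def kMarkovEquiv {V : Type} (E₁ E₂ : V → V → Prop) (k : ℕ) : Prop :=
  ∀ a b, ∀ c : Finset V, c.card ≤ k →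
    ((ofDAG E₁).DSep (↑c) a b ↔ (ofDAG E₂).DSep (↑c) a b)

/-- Markov equivalence of two mixed graphs. -/
def MarkovEquiv {V : Type} (G₁ G₂ : MixedGraph V) : Prop :=
  ∀ a b, ∀ c : Set V, G₁.DSep c a b ↔ G₂.DSep c a b

/-! ### Auxiliary development -/

namespace MixedGraph

open Relation List

variable {V : Type} {G : MixedGraph V}

/-- symmetry of a step -/
lemma step_symm {u v : V} {hu hv : Bool} (h : G.step u v hu hv) : G.step v u hv hu := by
  rcases h with ⟨h1, h2, h3⟩ | ⟨h1, h2, h3⟩ | ⟨h1, h2, h3⟩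
  · exact Or.inr (Or.inl ⟨h2, h1, h3⟩)
  · exact Or.inl ⟨h2, h1, h3⟩
  · exact Or.inr (Or.inr ⟨h2, h1, h3.symm⟩)

namespace Walk

def append : ∀ {a b c : V}, G.Walk a b → G.Walk b c → G.Walk a c
  | _, _, _, .nil _, q => q
  | _, _, _, .cons hu hv h p, q => .cons hu hv h (p.append q)

def single {u v : V} {hu hv : Bool} (h : G.step u v hu hv) : G.Walk u v :=
  .cons hu hv h (.nil v)

def reverse : ∀ {a b : V}, G.Walk a b → G.Walk b a
  | _, _, .nil v => .nil v
  | _, _, .cons _ _ h p => p.reverse.append (single (step_symm h))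

def length : ∀ {a b : V}, G.Walk a b → ℕ
  | _, _, .nil _ => 0
  | _, _, .cons _ _ _ p => p.length + 1

def isNil : ∀ {a b : V}, G.Walk a b → Bool
  | _, _, .nil _ => true
  | _, _, .cons _ _ _ _ => false

@[simp] lemma nil_append {a c : V} (q : G.Walk a c) : (Walk.nil a).append q = q := rfl
@[simp] lemma cons_append {a v b c : V} (hu hv : Bool) (h : G.step a v hu hv)
    (p : G.Walk v b) (q : G.Walk b c) :
    (Walk.cons hu hv h p).append q = Walk.cons hu hv h (p.append q) := rfl

@[simp] lemma append_nil : ∀ {a b : V} (p : G.Walk a b), p.append (Walk.nil b) = p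
  | _, _, .nil _ => rfl
  | _, _, .cons hu hv h p => by rw [cons_append, append_nil]

lemma append_assoc : ∀ {a b c d : V} (p : G.Walk a b) (q : G.Walk b c) (r : G.Walk c d),
    (p.append q).append r = p.append (q.append r)
  | _, _, _, _, .nil _, _, _ => rfl
  | _, _, _, _, .cons hu hv h p, q, r => by
      rw [cons_append, cons_append, cons_append, append_assoc]

@[simp] lemma support_nil {v : V} : (Walk.nil v : G.Walk v v).support = [v] := rfl
@[simp] lemma support_cons {a v b : V} (hu hv : Bool) (h : G.step a v hu hv) (p : G.Walk v b) :
    (Walk.cons hu hv h p).support = a :: p.support := rfl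

lemma support_ne_nil : ∀ {a b : V} (p : G.Walk a b), p.support ≠ []
  | _, _, .nil _ => by simp
  | _, _, .cons _ _ _ _ => by simp

lemma support_head : ∀ {a b : V} (p : G.Walk a b), ∃ t, p.support = a :: t
  | _, _, .nil _ => ⟨[], rfl⟩
  | _, _, .cons _ _ _ p => ⟨p.support, rfl⟩

lemma end_mem_support : ∀ {a b : V} (p : G.Walk a b), b ∈ p.support
  | _, _, .nil _ => by simp
  | _, _, .cons _ _ _ p => by simp [end_mem_support p]

lemma start_mem_support {a b : V} (p : G.Walk a b) : a ∈ p.support := by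
  obtain ⟨t, ht⟩ := support_head p; rw [ht]; simp

lemma support_append : ∀ {a b c : V} (p : G.Walk a b) (q : G.Walk b c),
    (p.append q).support = p.support.dropLast ++ q.support
  | _, _, _, .nil _, q => by simp
  | _, _, _, .cons hu hv h p, q => by
      rw [cons_append, support_cons, support_cons, support_append p q]
      rw [List.dropLast_cons_of_ne_nil (support_ne_nil p), List.cons_append]

@[simp] lemma length_nil {v : V} : (Walk.nil v : G.Walk v v).length = 0 := rfl
@[simp] lemma length_cons {a v b : V} (hu hv : Bool) (h : G.step a v hu hv) (p : G.Walk v b) :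
    (Walk.cons hu hv h p).length = p.length + 1 := rfl

lemma length_append : ∀ {a b c : V} (p : G.Walk a b) (q : G.Walk b c),
    (p.append q).length = p.length + q.length
  | _, _, _, .nil _, q => by simp
  | _, _, _, .cons hu hv h p, q => by
      rw [cons_append, length_cons, length_cons, length_append p q]; omega

@[simp] lemma isNil_nil {v : V} : (Walk.nil v : G.Walk v v).isNil = true := rfl
@[simp] lemma isNil_cons {a v b : V} (hu hv : Bool) (h : G.step a v hu hv) (p : G.Walk v b) :
    (Walk.cons hu hv h p).isNil = false := rfl

lemma isNil_append : ∀ {a b c : V} (p : G.Walk a b) (q : G.Walk b c),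
    (p.append q).isNil = (p.isNil && q.isNil)
  | _, _, _, .nil _, q => by simp
  | _, _, _, .cons _ _ _ _, q => by simp

@[simp] lemma firstHead_nil {v : V} : (Walk.nil v : G.Walk v v).firstHead = none := rfl
@[simp] lemma firstHead_cons {a v b : V} (hu hv : Bool) (h : G.step a v hu hv) (p : G.Walk v b) :
    (Walk.cons hu hv h p).firstHead = some hu := rfl

@[simp] lemma lastHead_nil {v : V} : (Walk.nil v : G.Walk v v).lastHead = none := rfl
@[simp] lemma lastHead_cons_nil {a v : V} (hu hv : Bool) (h : G.step a v hu hv) :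
    (Walk.cons hu hv h (Walk.nil v)).lastHead = some hv := rfl
@[simp] lemma lastHead_cons_cons {a v v' b : V} (hu hv hu' hv' : Bool) (h : G.step a v hu hv)
    (h' : G.step v v' hu' hv') (p : G.Walk v' b) :
    (Walk.cons hu hv h (Walk.cons hu' hv' h' p)).lastHead
      = (Walk.cons hu' hv' h' p).lastHead := rfl

@[simp] lemma marksInternal_nil {v : V} : (Walk.nil v : G.Walk v v).marksInternal = [] := rfl
@[simp] lemma marksInternal_cons_nil {a v : V} (hu hv : Bool) (h : G.step a v hu hv) :
    (Walk.cons hu hv h (Walk.nil v)).marksInternal = [] := rfl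
@[simp] lemma marksInternal_cons_cons {a v v' b : V} (hu hv hu' hv' : Bool) (h : G.step a v hu hv)
    (h' : G.step v v' hu' hv') (p : G.Walk v' b) :
    (Walk.cons hu hv h (Walk.cons hu' hv' h' p)).marksInternal
      = (v, hv, hu') :: (Walk.cons hu' hv' h' p).marksInternal := rfl

lemma firstHead_append_nonnil {a b c : V} (p : G.Walk a b) (q : G.Walk b c)
    (hp : p.isNil = false) : (p.append q).firstHead = p.firstHead := by
  cases p with
  | nil => simp at hp
  | cons hu hv h p => rfl

lemma lastHead_append_cons : ∀ {a b v c : V} (p : G.Walk a b) (hu hv : Bool)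
    (h : G.step b v hu hv) (q : G.Walk v c),
    (p.append (Walk.cons hu hv h q)).lastHead = (Walk.cons hu hv h q).lastHead
  | _, _, _, _, .nil _, _, _, _, _ => rfl
  | _, _, _, _, .cons _ _ _ (.nil _), _, _, _, _ => rfl
  | _, _, _, _, .cons _ _ _ (.cons hu'' hv'' h'' p'), hu, hv, h, q =>
      lastHead_append_cons (.cons hu'' hv'' h'' p') hu hv h q

/-- junction list helper -/
def junc (b : V) : Option Bool → Option Bool → List (V × Bool × Bool)
  | some x, some y => [(b, x, y)]
  | _, _ => []

lemma marksInternal_append : ∀ {a b c : V} (p : G.Walk a b) (q : G.Walk b c),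
    (p.append q).marksInternal
      = p.marksInternal ++ junc b p.lastHead q.firstHead ++ q.marksInternal
  | _, _, _, .nil _, q => by simp [junc]
  | _, _, _, .cons hu hv h (.nil _), q => by
      cases q with
      | nil => simp [junc]
      | cons hu' hv' h' q' => simp [junc]
  | _, _, _, .cons hu hv h (.cons hu' hv' h' p'), q => by
      have ih := marksInternal_append (Walk.cons hu' hv' h' p') q
      show ((Walk.cons hu hv h (Walk.cons hu' hv' h' (p'.append q)))).marksInternal = _
      rw [marksInternal_cons_cons]
      rw [show (Walk.cons hu' hv' h' (p'.append q)) = (Walk.cons hu' hv' h' p').append q from rfl]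
      rw [ih, marksInternal_cons_cons, lastHead_cons_cons]
      simp

@[simp] lemma reverse_nil {v : V} : (Walk.nil v : G.Walk v v).reverse = Walk.nil v := rfl

lemma reverse_cons {a v b : V} (hu hv : Bool) (h : G.step a v hu hv) (p : G.Walk v b) :
    (Walk.cons hu hv h p).reverse = p.reverse.append (single (step_symm h)) := rfl

lemma isNil_reverse : ∀ {a b : V} (p : G.Walk a b), p.reverse.isNil = p.isNil
  | _, _, .nil _ => rfl
  | _, _, .cons hu hv h p => by
      rw [reverse_cons, isNil_append]
      simp [single]

lemma reverse_append : ∀ {a b c : V} (p : G.Walk a b) (q : G.Walk b c),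
    (p.append q).reverse = q.reverse.append p.reverse
  | _, _, _, .nil _, q => by simp
  | _, _, _, .cons hu hv h p, q => by
      rw [cons_append, reverse_cons, reverse_cons, reverse_append p q, append_assoc]

lemma reverse_reverse : ∀ {a b : V} (p : G.Walk a b), p.reverse.reverse = p
  | _, _, .nil _ => rfl
  | _, _, .cons hu hv h p => by
      rw [reverse_cons, reverse_append, reverse_reverse p]
      rfl

lemma support_reverse : ∀ {a b : V} (p : G.Walk a b), p.reverse.support = p.support.reverse
  | _, _, .nil _ => rfl
  | _, _, .cons hu hv h p => by
      rw [reverse_cons, support_append, support_reverse p, support_cons]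
      obtain ⟨t, ht⟩ := support_head p
      rw [ht]
      simp [single]

lemma firstHead_reverse : ∀ {a b : V} (p : G.Walk a b), p.reverse.firstHead = p.lastHead
  | _, _, .nil _ => rfl
  | _, _, .cons hu hv h (.nil _) => rfl
  | _, _, .cons hu hv h (.cons hu' hv' h' p') => by
      rw [reverse_cons, firstHead_append_nonnil _ _ (by
        rw [isNil_reverse]; rfl)]
      rw [lastHead_cons_cons]
      exact firstHead_reverse (Walk.cons hu' hv' h' p')

lemma lastHead_reverse {a b : V} (p : G.Walk a b) : p.reverse.lastHead = p.firstHead := by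
  conv_rhs => rw [← reverse_reverse p]
  rw [firstHead_reverse]

lemma marksInternal_reverse : ∀ {a b : V} (p : G.Walk a b),
    p.reverse.marksInternal
      = (p.marksInternal.map (fun e => (e.1, e.2.2, e.2.1))).reverse
  | _, _, .nil _ => rfl
  | _, _, .cons hu hv h (.nil _) => rfl
  | _, _, .cons hu hv h (.cons hu' hv' h' p') => by
      rw [reverse_cons, marksInternal_append, marksInternal_reverse (Walk.cons hu' hv' h' p')]
      rw [lastHead_reverse, marksInternal_cons_cons]
      simp [single, junc]

lemma mem_marksInternal_reverse {a b : V} {p : G.Walk a b} {e : V × Bool × Bool} :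
    e ∈ p.reverse.marksInternal ↔ (e.1, e.2.2, e.2.1) ∈ p.marksInternal := by
  rw [marksInternal_reverse]
  simp only [List.mem_reverse, List.mem_map]
  constructor
  · rintro ⟨f, hf, hfe⟩
    obtain ⟨f1, f2, f3⟩ := f
    cases hfe
    exact hf
  · intro h
    exact ⟨(e.1, e.2.2, e.2.1), h, rfl⟩

lemma DConnecting.reverse {c : Set V} {a b : V} {p : G.Walk a b}
    (h : p.DConnecting c) : p.reverse.DConnecting c := by
  intro e he
  rw [mem_marksInternal_reverse] at he
  have := h _ he
  constructor
  · rintro ⟨h1, h2⟩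
    exact this.1 ⟨h2, h1⟩
  · intro hn
    exact this.2 (fun ⟨h1, h2⟩ => hn ⟨h2, h1⟩)

lemma IsPath.reverse {a b : V} {p : G.Walk a b} (h : p.IsPath) : p.reverse.IsPath := by
  unfold IsPath at h ⊢
  rw [support_reverse]
  exact List.nodup_reverse.mpr h

/-- d-connection is symmetric -/
lemma dconn_symm {c : Set V} {a b : V} (h : G.DConn c a b) : G.DConn c b a := by
  obtain ⟨w, hw1, hw2⟩ := h
  exact ⟨w.reverse, hw1.reverse, hw2.reverse⟩

lemma dsep_symm {c : Set V} {a b : V} (h : G.DSep c a b) : G.DSep c b a :=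
  fun hc => h (dconn_symm hc)

/-- Gluing d-connecting walks. -/
lemma DConnecting.append {c : Set V} {a b d : V} {p : G.Walk a b} {q : G.Walk b d}
    (hp : p.DConnecting c) (hq : q.DConnecting c)
    (hj : ∀ x y, p.lastHead = some x → q.firstHead = some y →
      ((x = true ∧ y = true) → ∃ s ∈ c, G.Anc b s) ∧ (¬ (x = true ∧ y = true) → b ∉ c)) :
    (p.append q).DConnecting c := by
  intro e he
  rw [marksInternal_append] at he
  rcases List.mem_append.mp he with he' | he'
  · rcases List.mem_append.mp he' with he'' | he''
    · exact hp _ he''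
    · unfold junc at he''
      rcases hx : p.lastHead with _ | x <;> rcases hy : q.firstHead with _ | y <;>
        rw [hx, hy] at he'' <;> simp at he''
      cases he''
      exact hj x y hx hy
  · exact hq _ he'

/-- d-connecting when consing onto a walk. -/
lemma DConnecting.cons {c : Set V} {a v b : V} {hu hv : Bool} {h : G.step a v hu hv}
    {p : G.Walk v b} (hp : p.DConnecting c)
    (hj : ∀ y, p.firstHead = some y →
      ((hv = true ∧ y = true) → ∃ s ∈ c, G.Anc v s) ∧ (¬ (hv = true ∧ y = true) → v ∉ c)) :
    (Walk.cons hu hv h p).DConnecting c := by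
  intro e he
  cases p with
  | nil => simp at he
  | cons hu' hv' h' p' =>
      rw [marksInternal_cons_cons] at he
      rcases List.mem_cons.mp he with he' | he'
      · cases he'
        exact hj hu' rfl
      · exact hp _ he'

/-- marks of internal vertices of paths avoid endpoints. -/
lemma marks_ne_ends {a b : V} (w : G.Walk a b) (hnd : w.support.Nodup) :
    ∀ e ∈ w.marksInternal, e.1 ≠ a ∧ e.1 ≠ b ∧ e.1 ∈ w.support := by
  induction w with
  | nil => intro e he; simp at he
  | cons hu hv h p ih =>
      rename_i a m b
      intro e he
      cases p with
      | nil => simp at he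
      | cons hu' hv' h' p' =>
          rw [marksInternal_cons_cons] at he
          rw [support_cons] at hnd
          obtain ⟨ha, hnd'⟩ := List.nodup_cons.mp hnd
          rcases List.mem_cons.mp he with he' | he'
          · subst he'
            refine ⟨?_, ?_, ?_⟩
            · intro hma
              exact ha (hma ▸ start_mem_support _)
            · intro hmb
              have hb := end_mem_support p'
              rw [support_cons] at hnd'
              exact (List.nodup_cons.mp hnd').1 (hmb ▸ hb)
            · simp [start_mem_support]
          · obtain ⟨h1, h2, h3⟩ := ih hnd' e he'
            refine ⟨fun hea => ha (hea ▸ h3), h2, ?_⟩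
            rw [support_cons]
            exact List.mem_cons_of_mem _ h3

lemma lastHead_isSome_cons {a v b : V} (hu hv : Bool) (h : G.step a v hu hv) (p : G.Walk v b) :
    ∃ t, (Walk.cons hu hv h p).lastHead = some t := by
  induction p generalizing a hu hv with
  | nil => exact ⟨hv, rfl⟩
  | cons hu' hv' h' p' ih =>
      rw [lastHead_cons_cons]
      exact ih hu' hv' h'

end Walk

end MixedGraph

/-! ### DAG walks -/

section DAG

open Relation MixedGraph MixedGraph.Walk

variable {V : Type} {E : V → V → Prop}

lemma anc_ofDAG {x y : V} : (ofDAG E).Anc x y ↔ Relation.ReflTransGen E x y := Iff.rfl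

lemma rtg_cases {x y : V} (h : Relation.ReflTransGen E x y) : x = y ∨ Relation.TransGen E x y := by
  induction h with
  | refl => exact Or.inl rfl
  | tail h' e ih =>
      rcases ih with rfl | ih
      · exact Or.inr (TransGen.single e)
      · exact Or.inr (ih.tail e)

lemma acyclic_tg_rtg (hE : Acyclic E) {x y : V} (h1 : Relation.TransGen E x y)
    (h2 : Relation.ReflTransGen E y x) : False := by
  rcases rtg_cases h2 with rfl | h2
  · exact hE _ h1
  · exact hE _ (h1.trans h2)

lemma step_ofDAG_false {u v : V} {hv : Bool} (h : (ofDAG E).step u v false hv) :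
    E u v ∧ hv = true := by
  rcases h with ⟨_, h2, h3⟩ | ⟨h1, _, _⟩ | ⟨h1, _, _⟩
  · exact ⟨h3, h2⟩
  · exact absurd h1 (by simp)
  · exact absurd h1 (by simp)

lemma step_ofDAG {u v : V} {hu hv : Bool} (h : (ofDAG E).step u v hu hv) :
    (hu = false ∧ hv = true ∧ E u v) ∨ (hu = true ∧ hv = false ∧ E v u) := by
  rcases h with h | h | ⟨_, _, h3⟩
  · exact Or.inl h
  · exact Or.inr h
  · rcases h3 with h3 | h3 <;> exact absurd h3 (by simp [ofDAG])

/-- Descent lemma. -/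
lemma desc (S : Set V) : ∀ {v y : V} (W : (ofDAG E).Walk v y),
    (∀ e ∈ W.marksInternal, e.2.1 = true → e.2.2 = true → ∃ x ∈ S, Relation.ReflTransGen E e.1 x) →
    W.firstHead = some false →
    Relation.TransGen E v y ∨ ∃ x ∈ S, Relation.ReflTransGen E v x := by
  intro v y W
  induction W with
  | nil => intro _ hf; simp at hf
  | cons hu hv h p ih =>
      intro hval hf
      rw [firstHead_cons] at hf
      have hu0 : hu = false := by simpa using hf.symm
      subst hu0
      obtain ⟨hE1, hv1⟩ := step_ofDAG_false h
      subst hv1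
      cases p with
      | nil => exact Or.inl (TransGen.single hE1)
      | cons hu' hv' h' p' =>
          by_cases hcu : hu' = true
          · subst hcu
            have := hval _ (by rw [marksInternal_cons_cons]; exact List.mem_cons_self) rfl rfl
            obtain ⟨x, hx1, hx2⟩ := this
            exact Or.inr ⟨x, hx1, Relation.ReflTransGen.head hE1 (by simpa using hx2)⟩
          · have hu'0 : hu' = false := by simpa using hcu
            subst hu'0
            have hval' : ∀ e ∈ (Walk.cons false hv' h' p').marksInternal,
                e.2.1 = true → e.2.2 = true → ∃ x ∈ S, Relation.ReflTransGen E e.1 x := by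
              intro e he
              exact hval e (by rw [marksInternal_cons_cons]; exact List.mem_cons_of_mem _ he)
            rcases ih hval' rfl with h1 | ⟨x, hx1, hx2⟩
            · exact Or.inl (TransGen.head hE1 h1)
            · exact Or.inr ⟨x, hx1, Relation.ReflTransGen.head hE1 hx2⟩

/-- Membership (forward) version of descent. -/
lemma desc_mem (S : Set V) : ∀ {v y : V} (W : (ofDAG E).Walk v y),
    (∀ e ∈ W.marksInternal, e.2.1 = true → e.2.2 = true → ∃ x ∈ S, Relation.ReflTransGen E e.1 x) →
    ∀ w h₁, (w, h₁, false) ∈ W.marksInternal →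
    Relation.TransGen E w y ∨ ∃ x ∈ S, Relation.ReflTransGen E w x := by
  intro v y W
  induction W with
  | nil => intro _ w h₁ hmem; simp at hmem
  | cons hu hv h p ih =>
      intro hval w h₁ hmem
      cases p with
      | nil => simp at hmem
      | cons hu' hv' h' p' =>
          rw [marksInternal_cons_cons] at hmem
          have hval' : ∀ e ∈ (Walk.cons hu' hv' h' p').marksInternal,
              e.2.1 = true → e.2.2 = true → ∃ x ∈ S, Relation.ReflTransGen E e.1 x := by
            intro e he
            exact hval e (by rw [marksInternal_cons_cons]; exact List.mem_cons_of_mem _ he)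
          rcases List.mem_cons.mp hmem with he | he
          · rw [Prod.mk.injEq] at he
            obtain ⟨hw, hmarks⟩ := he
            rw [Prod.mk.injEq] at hmarks
            obtain ⟨hhv, hhu⟩ := hmarks
            subst hw
            exact desc S (Walk.cons hu' hv' h' p') hval' (by rw [firstHead_cons, ← hhu])
          · exact ih hval' w h₁ he

/-- Membership (backward) version of descent. -/
lemma desc_mem_rev (S : Set V) {v y : V} (W : (ofDAG E).Walk v y)
    (hval : ∀ e ∈ W.marksInternal, e.2.1 = true → e.2.2 = true →
      ∃ x ∈ S, Relation.ReflTransGen E e.1 x)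
    (w : V) (h₂ : Bool) (hmem : (w, false, h₂) ∈ W.marksInternal) :
    Relation.TransGen E w v ∨ ∃ x ∈ S, Relation.ReflTransGen E w x := by
  have hval' : ∀ e ∈ W.reverse.marksInternal, e.2.1 = true → e.2.2 = true →
      ∃ x ∈ S, Relation.ReflTransGen E e.1 x := by
    intro e he h1 h2
    rw [mem_marksInternal_reverse] at he
    exact hval (e.1, e.2.2, e.2.1) he h2 h1
  have hmem' : (w, h₂, false) ∈ W.reverse.marksInternal := by
    rw [mem_marksInternal_reverse]; exact hmem
  exact desc_mem S W.reverse hval' w h₂ hmem'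

/-- Arrival version of descent: if the last mark is a tail, descend backwards. -/
lemma desc_last (S : Set V) {v y : V} (W : (ofDAG E).Walk v y)
    (hval : ∀ e ∈ W.marksInternal, e.2.1 = true → e.2.2 = true →
      ∃ x ∈ S, Relation.ReflTransGen E e.1 x)
    (hl : W.lastHead = some false) :
    Relation.TransGen E y v ∨ ∃ x ∈ S, Relation.ReflTransGen E y x := by
  have hval' : ∀ e ∈ W.reverse.marksInternal, e.2.1 = true → e.2.2 = true →
      ∃ x ∈ S, Relation.ReflTransGen E e.1 x := by
    intro e he h1 h2
    rw [mem_marksInternal_reverse] at he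
    exact hval (e.1, e.2.2, e.2.1) he h2 h1
  exact desc S W.reverse hval' (by rw [firstHead_reverse]; exact hl)

end DAG

namespace MixedGraph.Walk

variable {V : Type} {G : MixedGraph V}

lemma isNil_false_of_firstHead {a b : V} {p : G.Walk a b} {t : Bool}
    (h : p.firstHead = some t) : p.isNil = false := by
  cases p with
  | nil => simp at h
  | cons _ _ _ _ => rfl

lemma isNil_false_of_lastHead {a b : V} {p : G.Walk a b} {t : Bool}
    (h : p.lastHead = some t) : p.isNil = false := by
  cases p with
  | nil => simp at h
  | cons _ _ _ _ => rfl

lemma lastHead_append_nonnil {a b c : V} (p : G.Walk a b) (q : G.Walk b c)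
    (hq : q.isNil = false) : (p.append q).lastHead = q.lastHead := by
  cases q with
  | nil => simp at hq
  | cons hu hv h q' => exact lastHead_append_cons p hu hv h q'

end MixedGraph.Walk

section Pieces

open Relation MixedGraph MixedGraph.Walk

variable {V : Type} {E : V → V → Prop} {k : ℕ}

lemma dconn_val {S : Set V} {u m : V} {W : (ofDAG E).Walk u m} (h : W.DConnecting S) :
    ∀ e ∈ W.marksInternal, e.2.1 = true → e.2.2 = true →
      ∃ x ∈ S, Relation.ReflTransGen E e.1 x :=
  fun e he h1 h2 => (h e he).1 ⟨h1, h2⟩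

lemma noncoll_cases {e : V × Bool × Bool} (h : ¬ (e.2.1 = true ∧ e.2.2 = true)) :
    e.2.1 = false ∨ e.2.2 = false := by
  rcases Bool.eq_false_or_eq_true e.2.1 with h1 | h1
  · rcases Bool.eq_false_or_eq_true e.2.2 with h2 | h2
    · exact absurd ⟨h1, h2⟩ h
    · exact Or.inr h2
  · exact Or.inl h1

/-- **Key lemma**: if `u, m` are k-covered and `m` is not an ancestor of `u`,
then for any conditioning set of size at most `k` there is a d-connecting walk
from `u` to `m` arriving at `m` with an arrowhead. -/
lemma pieceHeadM (hE : Acyclic E) {u m : V} (hKC : KCovered E k u m)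
    (hmu : ¬ Relation.ReflTransGen E m u) {c : Finset V} (hc : c.card ≤ k) :
    ∃ W : (ofDAG E).Walk u m, W.DConnecting ↑c ∧ W.lastHead = some true := by
  classical
  set B := c.filter (fun x => ¬ Relation.ReflTransGen E m x) with hBdef
  have hBsub : B ⊆ c := Finset.filter_subset _ _
  have hBprop : ∀ x ∈ B, ¬ Relation.ReflTransGen E m x :=
    fun x hx => (Finset.mem_filter.mp hx).2
  have hBmem : ∀ x ∈ c, x ∉ B → Relation.ReflTransGen E m x := by
    intro x hx hnx
    by_contra hr
    exact hnx (Finset.mem_filter.mpr ⟨hx, hr⟩)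
  have hconn : (ofDAG E).DConn ↑B u m :=
    not_not.mp (hKC B (le_trans (Finset.card_filter_le _ _) hc))
  obtain ⟨P, hPpath, hPval⟩ := hconn
  have hval := dconn_val hPval
  have hum : u ≠ m := fun h => hmu (h ▸ Relation.ReflTransGen.refl)
  have hPne : ∃ t, P.lastHead = some t := by
    cases P with
    | nil => exact absurd rfl hum
    | cons hu hv h p => exact lastHead_isSome_cons _ _ _ _
  obtain ⟨t, hlast⟩ := hPne
  have htt : t = true := by
    by_contra hft
    have ht : t = false := by simpa using hft
    subst ht
    rcases desc_last (↑B) P hval hlast with h1 | ⟨x, hx1, hx2⟩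
    · exact hmu h1.to_reflTransGen
    · exact hBprop x (Finset.mem_coe.mp hx1) hx2
  subst htt
  refine ⟨P, ?_, hlast⟩
  intro e he
  have hmne := marks_ne_ends P hPpath e he
  constructor
  · intro hcoll
    obtain ⟨x, hx1, hx2⟩ := (hPval e he).1 hcoll
    exact ⟨x, Finset.mem_coe.mpr (hBsub (Finset.mem_coe.mp hx1)), hx2⟩
  · intro hncoll hin
    have hniB : e.1 ∉ (↑B : Set V) := (hPval e he).2 hncoll
    have hrtg : Relation.ReflTransGen E m e.1 :=
      hBmem e.1 (Finset.mem_coe.mp hin) (fun hb => hniB (Finset.mem_coe.mpr hb))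
    have htg : Relation.TransGen E m e.1 := by
      rcases rtg_cases hrtg with heq | htg
      · exact absurd heq.symm hmne.2.1
      · exact htg
    have he' : (e.1, e.2.1, e.2.2) ∈ P.marksInternal := he
    rcases noncoll_cases hncoll with hf1 | hf2
    · rw [hf1] at he'
      rcases desc_mem_rev (↑B) P hval e.1 e.2.2 he' with htg2 | ⟨x, hx1, hx2⟩
      · exact hmu (htg.trans htg2).to_reflTransGen
      · exact hBprop x (Finset.mem_coe.mp hx1) (hrtg.trans hx2)
    · rw [hf2] at he'
      rcases desc_mem (↑B) P hval e.1 e.2.1 he' with htg2 | ⟨x, hx1, hx2⟩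
      · exact hE m (htg.trans htg2)
      · exact hBprop x (Finset.mem_coe.mp hx1) (hrtg.trans hx2)

/-- Variant with arrowheads at both ends (for bidirected edges). -/
lemma pieceBothHeads (hE : Acyclic E) {u m : V} (hKC : KCovered E k u m)
    (hmu : ¬ Relation.ReflTransGen E m u) (hum : ¬ Relation.ReflTransGen E u m)
    {c : Finset V} (hc : c.card ≤ k) :
    ∃ W : (ofDAG E).Walk u m, W.DConnecting ↑c ∧ W.firstHead = some true ∧
      W.lastHead = some true := by
  classical
  set B := c.filter (fun x => ¬ Relation.ReflTransGen E m x ∧ ¬ Relation.ReflTransGen E u x)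
    with hBdef
  have hBsub : B ⊆ c := Finset.filter_subset _ _
  have hBprop : ∀ x ∈ B, ¬ Relation.ReflTransGen E m x ∧ ¬ Relation.ReflTransGen E u x :=
    fun x hx => (Finset.mem_filter.mp hx).2
  have hBmem : ∀ x ∈ c, x ∉ B →
      Relation.ReflTransGen E m x ∨ Relation.ReflTransGen E u x := by
    intro x hx hnx
    by_contra hr
    push_neg at hr
    exact hnx (Finset.mem_filter.mpr ⟨hx, hr⟩)
  have hconn : (ofDAG E).DConn ↑B u m :=
    not_not.mp (hKC B (le_trans (Finset.card_filter_le _ _) hc))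
  obtain ⟨P, hPpath, hPval⟩ := hconn
  have hval := dconn_val hPval
  have humne : u ≠ m := fun h => hmu (h ▸ Relation.ReflTransGen.refl)
  have hPne : ∃ t, P.lastHead = some t := by
    cases P with
    | nil => exact absurd rfl humne
    | cons hu hv h p => exact lastHead_isSome_cons _ _ _ _
  obtain ⟨t, hlast⟩ := hPne
  have htt : t = true := by
    by_contra hft
    have ht : t = false := by simpa using hft
    subst ht
    rcases desc_last (↑B) P hval hlast with h1 | ⟨x, hx1, hx2⟩
    · exact hmu h1.to_reflTransGen
    · exact (hBprop x (Finset.mem_coe.mp hx1)).1 hx2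
  subst htt
  have hPfirst : ∃ s, P.firstHead = some s := by
    cases P with
    | nil => exact absurd rfl humne
    | cons hu hv h p => exact ⟨hu, rfl⟩
  obtain ⟨s, hfirst⟩ := hPfirst
  have hss : s = true := by
    by_contra hfs
    have hs : s = false := by simpa using hfs
    subst hs
    rcases desc (↑B) P hval hfirst with h1 | ⟨x, hx1, hx2⟩
    · exact hum h1.to_reflTransGen
    · exact (hBprop x (Finset.mem_coe.mp hx1)).2 hx2
  subst hss
  refine ⟨P, ?_, hfirst, hlast⟩
  intro e he
  have hmne := marks_ne_ends P hPpath e he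
  constructor
  · intro hcoll
    obtain ⟨x, hx1, hx2⟩ := (hPval e he).1 hcoll
    exact ⟨x, Finset.mem_coe.mpr (hBsub (Finset.mem_coe.mp hx1)), hx2⟩
  · intro hncoll hin
    have hniB : e.1 ∉ (↑B : Set V) := (hPval e he).2 hncoll
    have hrtg : Relation.ReflTransGen E m e.1 ∨ Relation.ReflTransGen E u e.1 :=
      hBmem e.1 (Finset.mem_coe.mp hin) (fun hb => hniB (Finset.mem_coe.mpr hb))
    have he' : (e.1, e.2.1, e.2.2) ∈ P.marksInternal := he
    rcases noncoll_cases hncoll with hf1 | hf2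
    · rw [hf1] at he'
      rcases desc_mem_rev (↑B) P hval e.1 e.2.2 he' with htg2 | ⟨x, hx1, hx2⟩
      · rcases hrtg with hr | hr
        · exact hmu (hr.trans htg2.to_reflTransGen)
        · exact acyclic_tg_rtg hE htg2 hr
      · rcases hrtg with hr | hr
        · exact (hBprop x (Finset.mem_coe.mp hx1)).1 (hr.trans hx2)
        · exact (hBprop x (Finset.mem_coe.mp hx1)).2 (hr.trans hx2)
    · rw [hf2] at he'
      rcases desc_mem (↑B) P hval e.1 e.2.1 he' with htg2 | ⟨x, hx1, hx2⟩
      · rcases hrtg with hr | hr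
        · exact acyclic_tg_rtg hE htg2 hr
        · exact hum (hr.trans htg2.to_reflTransGen)
      · rcases hrtg with hr | hr
        · exact (hBprop x (Finset.mem_coe.mp hx1)).1 (hr.trans hx2)
        · exact (hBprop x (Finset.mem_coe.mp hx1)).2 (hr.trans hx2)

end Pieces

section Pieces2

open Relation MixedGraph MixedGraph.Walk

variable {V : Type} {E : V → V → Prop} {k : ℕ}

lemma dirScan (c : Finset V) {u m : V} (h : Relation.TransGen E u m) :
    (∃ W : (ofDAG E).Walk u m, W.DConnecting ↑c ∧ W.firstHead = some false ∧
      W.lastHead = some true) ∨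
    (∃ s, s ∈ c ∧ ∃ W : (ofDAG E).Walk u s, W.DConnecting ↑c ∧ W.firstHead = some false ∧
      W.lastHead = some true) := by
  classical
  induction h using Relation.TransGen.head_induction_on with
  | single hE1 =>
      rename_i a
      left
      refine ⟨single (Or.inl ⟨rfl, rfl, hE1⟩), ?_, rfl, rfl⟩
      intro e he
      simp [single, marksInternal] at he
  | head hE1 htg ih =>
      rename_i a x
      by_cases hxc : x ∈ c
      · right
        refine ⟨x, hxc, single (Or.inl ⟨rfl, rfl, hE1⟩), ?_, rfl, rfl⟩
        intro e he
        simp [single, marksInternal] at he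
      · have prepend : ∀ {z : V} (W : (ofDAG E).Walk x z), W.DConnecting ↑c →
            W.firstHead = some false → W.lastHead = some true →
            ∃ W' : (ofDAG E).Walk a z, W'.DConnecting ↑c ∧ W'.firstHead = some false ∧
              W'.lastHead = some true := by
          intro z W hW hWf hWl
          refine ⟨Walk.cons false true (Or.inl ⟨rfl, rfl, hE1⟩) W, ?_, rfl, ?_⟩
          · refine DConnecting.cons hW ?_
            intro y hy
            rw [hWf] at hy
            have : y = false := by simpa using hy.symm
            subst this
            constructor
            · rintro ⟨_, h2⟩; simp at h2
            · intro _; exact fun hmem => hxc (Finset.mem_coe.mp hmem)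
          · cases W with
            | nil => simp at hWf
            | cons hu' hv' h' p' => exact hWl
        rcases ih with ⟨W, hW, hWf, hWl⟩ | ⟨s, hs, W, hW, hWf, hWl⟩
        · left; exact prepend W hW hWf hWl
        · right
          obtain ⟨W', hW'⟩ := prepend W hW hWf hWl
          exact ⟨s, hs, W', hW'⟩

/-- Tail-departure piece: a d-connecting walk from `u` to `m` leaving `u` with a
tail and arriving at `m` with an arrowhead, when `u` is an ancestor of `m` and
`u` is not in the conditioning set. -/
lemma pieceTail (hE : Acyclic E) {u m : V} (htg : Relation.TransGen E u m)
    {c : Finset V} (hu : u ∉ (↑c : Set V)) (hKC : KCovered E k u m) (hc : c.card ≤ k) :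
    ∃ W : (ofDAG E).Walk u m, W.DConnecting ↑c ∧ W.firstHead = some false ∧
      W.lastHead = some true := by
  rcases dirScan c htg with ⟨W, h1, h2, h3⟩ | ⟨s, hs, Wf, hWf, hff, hfl⟩
  · exact ⟨W, h1, h2, h3⟩
  · have hmu : ¬ Relation.ReflTransGen E m u := fun hr => acyclic_tg_rtg hE htg hr
    obtain ⟨W1, hW1, hW1l⟩ := pieceHeadM hE hKC hmu hc
    have hWfnn : Wf.isNil = false := isNil_false_of_firstHead hff
    have hrevnn : Wf.reverse.isNil = false := by rw [isNil_reverse]; exact hWfnn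
    have hW1nn : W1.isNil = false := isNil_false_of_lastHead hW1l
    have hmid : (Wf.reverse.append W1).DConnecting ↑c := by
      refine DConnecting.append hWf.reverse hW1 ?_
      intro x y hx hy
      rw [lastHead_reverse, hff] at hx
      have hxf : x = false := by simpa using hx.symm
      subst hxf
      constructor
      · rintro ⟨h1, _⟩; simp at h1
      · intro _; exact hu
    refine ⟨Wf.append (Wf.reverse.append W1), ?_, ?_, ?_⟩
    · refine DConnecting.append hWf hmid ?_
      intro x y hx hy
      rw [hfl] at hx
      have hxt : x = true := by simpa using hx.symm
      subst hxt
      rw [firstHead_append_nonnil _ _ hrevnn, firstHead_reverse, hfl] at hy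
      have hyt : y = true := by simpa using hy.symm
      subst hyt
      constructor
      · intro _
        exact ⟨s, Finset.mem_coe.mpr hs, Relation.ReflTransGen.refl⟩
      · intro hcon; exact absurd ⟨rfl, rfl⟩ hcon
    · rw [firstHead_append_nonnil _ _ hWfnn]; exact hff
    · rw [lastHead_append_nonnil _ _ (by rw [isNil_append, hrevnn]; rfl),
        lastHead_append_nonnil _ _ hW1nn]
      exact hW1l

end Pieces2

namespace MixedGraph.Walk

open Relation

variable {V : Type} {G : MixedGraph V}

lemma exists_first_split {a b : V} (w : G.Walk a b) (v : V) (hv : v ∈ w.support) :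
    ∃ (w₁ : G.Walk a v) (w₂ : G.Walk v b),
      w = w₁.append w₂ ∧ v ∉ w₁.support.dropLast := by
  classical
  induction w with
  | nil =>
      rename_i z
      have hva : v = z := by simpa using hv
      subst hva
      exact ⟨Walk.nil v, Walk.nil v, rfl, by simp⟩
  | cons hu hv' h p ih =>
      rename_i a' x b'
      by_cases hva : v = a'
      · subst hva
        exact ⟨Walk.nil v, Walk.cons hu hv' h p, rfl, by simp⟩
      · have hvp : v ∈ p.support := by
          rw [support_cons] at hv
          rcases List.mem_cons.mp hv with h1 | h1
          · exact absurd h1 hva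
          · exact h1
        obtain ⟨p₁, p₂, heq, hnd⟩ := ih hvp
        refine ⟨Walk.cons hu hv' h p₁, p₂, ?_, ?_⟩
        · rw [cons_append, ← heq]
        · rw [support_cons, List.dropLast_cons_of_ne_nil (support_ne_nil p₁)]
          intro hmem
          rcases List.mem_cons.mp hmem with h1 | h1
          · exact hva h1
          · exact hnd h1

lemma tail_reverse_eq {α : Type*} (l : List α) : l.reverse.tail = l.dropLast.reverse := by
  rcases l.eq_nil_or_concat with rfl | ⟨l', x, rfl⟩
  · simp
  · simp

lemma exists_last_split {a b : V} (w : G.Walk a b) (v : V) (hv : v ∈ w.support) :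
    ∃ (w₁ : G.Walk a v) (w₂ : G.Walk v b),
      w = w₁.append w₂ ∧ v ∉ w₂.support.tail := by
  have hv' : v ∈ w.reverse.support := by
    rw [support_reverse]
    simpa using hv
  obtain ⟨r₁, r₂, heq, hnd⟩ := exists_first_split w.reverse v hv'
  refine ⟨r₂.reverse, r₁.reverse, ?_, ?_⟩
  · have := congrArg Walk.reverse heq
    rw [reverse_reverse, reverse_append] at this
    exact this
  · rw [support_reverse, tail_reverse_eq]
    intro hmem
    exact hnd (by simpa using hmem)

end MixedGraph.Walk

section WalkToPath

open Relation MixedGraph MixedGraph.Walk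

variable {V : Type} {E : V → V → Prop}

lemma walk_to_path (hE : Acyclic E) (S : Set V) :
    ∀ (n : ℕ) {a b : V} (w : (ofDAG E).Walk a b), w.length ≤ n → w.DConnecting S →
    (ofDAG E).DConn S a b := by
  intro n
  induction n using Nat.strong_induction_on with
  | _ n ih =>
  intro a b w hlen hw
  classical
  by_cases hnd : w.support.Nodup
  · exact ⟨w, hnd, hw⟩
  · rw [List.nodup_iff_count_le_one] at hnd
    push_neg at hnd
    obtain ⟨v, hvcount⟩ := hnd
    have hv2 : 2 ≤ w.support.count v := hvcount
    have hvmem : v ∈ w.support := by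
      rw [← List.count_pos_iff]
      omega
    obtain ⟨w₁, w₂', heq1, hspec1⟩ := exists_first_split w v hvmem
    have hcount2 : 2 ≤ w₂'.support.count v := by
      have : w.support = w₁.support.dropLast ++ w₂'.support := by
        rw [heq1, support_append]
      rw [this, List.count_append] at hv2
      have h0 : w₁.support.dropLast.count v = 0 := List.count_eq_zero.mpr hspec1
      omega
    have hvmem2 : v ∈ w₂'.support := start_mem_support _
    obtain ⟨w₂ₐ, w₂ᵦ, heq2, hspec2⟩ := exists_last_split w₂' v hvmem2
    -- w₂ₐ is not nil
    have hw₂ₐnn : w₂ₐ.isNil = false := by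
      cases w₂ₐ with
      | nil =>
          exfalso
          rw [heq2, nil_append] at hcount2
          obtain ⟨t, ht⟩ := support_head w₂ᵦ
          rw [ht] at hcount2 hspec2
          simp only [List.count_cons_self] at hcount2
          have : 1 ≤ t.count v := by
            have := List.count_cons (a := v) (b := v) (l := t)
            simp at this
            omega
          exact hspec2 (by
            rw [List.tail_cons] at *
            exact List.count_pos_iff.mp (by omega))
      | cons _ _ _ _ => rfl
    -- marks of the original walk
    have hfa : ∃ y₁, w₂ₐ.firstHead = some y₁ := by
      cases w₂ₐ with
      | nil => simp at hw₂ₐnn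
      | cons hu' hv' h' p' => exact ⟨hu', rfl⟩
    obtain ⟨y₁, hy₁⟩ := hfa
    have hla : ∃ x₂, w₂ₐ.lastHead = some x₂ := by
      cases w₂ₐ with
      | nil => simp at hw₂ₐnn
      | cons hu' hv' h' p' => exact lastHead_isSome_cons _ _ _ _
    obtain ⟨x₂, hx₂⟩ := hla
    have hmw : w.marksInternal =
        w₁.marksInternal ++ junc v w₁.lastHead (some y₁) ++
          (w₂ₐ.marksInternal ++ junc v (some x₂) w₂ᵦ.firstHead ++ w₂ᵦ.marksInternal) := by
      rw [heq1, heq2, marksInternal_append, marksInternal_append,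
        firstHead_append_nonnil _ _ hw₂ₐnn, hy₁, hx₂]
    -- facts for sub-walks
    have hsub1 : ∀ e ∈ w₁.marksInternal, e ∈ w.marksInternal := by
      intro e he; rw [hmw]; simp [he]
    have hsubₐ : ∀ e ∈ w₂ₐ.marksInternal, e ∈ w.marksInternal := by
      intro e he; rw [hmw]; simp [he]
    have hsubᵦ : ∀ e ∈ w₂ᵦ.marksInternal, e ∈ w.marksInternal := by
      intro e he; rw [hmw]; simp [he]
    have hjunc1 : ∀ x, w₁.lastHead = some x → (v, x, y₁) ∈ w.marksInternal := by
      intro x hx; rw [hmw, hx]; simp [junc]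
    have hjunc2 : ∀ y, w₂ᵦ.firstHead = some y → (v, x₂, y) ∈ w.marksInternal := by
      intro y hy; rw [hmw, hy]; simp [junc]
    -- the shortened walk
    set w' : (ofDAG E).Walk a b := w₁.append w₂ᵦ with hw'def
    have hlen' : w'.length < w.length := by
      have h1 : w.length = w₁.length + (w₂ₐ.length + w₂ᵦ.length) := by
        rw [heq1, heq2, length_append, length_append]
      have h2 : w'.length = w₁.length + w₂ᵦ.length := by
        rw [hw'def, length_append]
      have h3 : 1 ≤ w₂ₐ.length := by
        cases w₂ₐ with
        | nil => simp at hw₂ₐnn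
        | cons _ _ _ p' => rw [length_cons]; omega
      omega
    have hw'valid : w'.DConnecting S := by
      rw [hw'def]
      refine DConnecting.append (fun e he => hw e (hsub1 e he))
        (fun e he => hw e (hsubᵦ e he)) ?_
      intro x y hx hy
      constructor
      · rintro ⟨hxt, hyt⟩
        subst hxt; subst hyt
        -- new collider at v; find justification
        by_cases hy₁t : y₁ = true
        · subst hy₁t
          exact (hw _ (hjunc1 true hx)).1 ⟨rfl, rfl⟩
        · have hy₁f : y₁ = false := by simpa using hy₁t
          subst hy₁f
          have hvalₐ : ∀ e ∈ w₂ₐ.marksInternal, e.2.1 = true → e.2.2 = true →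
              ∃ x ∈ S, Relation.ReflTransGen E e.1 x :=
            fun e he h1 h2 => (hw e (hsubₐ e he)).1 ⟨h1, h2⟩
          rcases desc S w₂ₐ hvalₐ hy₁ with htg | hex
          · exact absurd htg (hE v)
          · exact hex
      · intro hncoll
        rcases noncoll_cases (e := (v, x, y)) hncoll with hxf | hyf
        · simp only at hxf
          subst hxf
          exact (hw _ (hjunc1 false hx)).2 (by rintro ⟨h1, _⟩; simp at h1)
        · simp only at hyf
          subst hyf
          exact (hw _ (hjunc2 false hy)).2 (by rintro ⟨_, h2⟩; simp at h2)
    exact ih w'.length (by omega) w' le_rfl hw'valid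

end WalkToPath

section Transfer

open Relation MixedGraph MixedGraph.Walk

variable {V : Type} {E : V → V → Prop} {k : ℕ}

lemma anc_cl_to_rtg {x y : V} (h : (kClosure E k).Anc x y) :
    Relation.ReflTransGen E x y := by
  induction h with
  | refl => exact Relation.ReflTransGen.refl
  | tail h' e ih => exact ih.trans e.2.to_reflTransGen

/-- Piece for a middle edge of a cl-path: both end marks mirrored. -/
lemma pieceBoth (hE : Acyclic E) {c : Finset V} (hc : c.card ≤ k) {u m : V} {hu hv : Bool}
    (h : (kClosure E k).step u m hu hv)
    (hut : hu = false → u ∉ (↑c : Set V)) (hmt : hv = false → m ∉ (↑c : Set V)) :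
    ∃ W : (ofDAG E).Walk u m, W.DConnecting ↑c ∧ W.firstHead = some hu ∧
      W.lastHead = some hv := by
  rcases h with ⟨h1, h2, hK, hT⟩ | ⟨h1, h2, hK, hT⟩ | ⟨h1, h2, hb⟩
  · subst h1; subst h2
    obtain ⟨W, hW, hWf, hWl⟩ := pieceTail hE hT (hut rfl) hK hc
    exact ⟨W, hW, hWf, hWl⟩
  · subst h1; subst h2
    obtain ⟨W, hW, hWf, hWl⟩ := pieceTail hE hT (hmt rfl) hK hc
    refine ⟨W.reverse, hW.reverse, ?_, ?_⟩
    · rw [firstHead_reverse]; exact hWl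
    · rw [lastHead_reverse]; exact hWf
  · subst h1; subst h2
    have hfacts : KCovered E k u m ∧ ¬ Relation.ReflTransGen E m u ∧
        ¬ Relation.ReflTransGen E u m := by
      rcases hb with ⟨hK1, hK2, hn1, hn2⟩ | ⟨hK1, hK2, hn1, hn2⟩
      · exact ⟨hK1, hn2, hn1⟩
      · exact ⟨hK2, hn1, hn2⟩
    obtain ⟨hK, hn1, hn2⟩ := hfacts
    obtain ⟨W, hW, hWf, hWl⟩ := pieceBothHeads hE hK hn1 hn2 hc
    exact ⟨W, hW, hWf, hWl⟩

/-- Piece for the first edge of a cl-path: only the far-end mark mirrored. -/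
lemma pieceRight (hE : Acyclic E) {c : Finset V} (hc : c.card ≤ k) {a m : V} {hu hv : Bool}
    (h : (kClosure E k).step a m hu hv) (hmt : hv = false → m ∉ (↑c : Set V)) :
    ∃ W : (ofDAG E).Walk a m, W.DConnecting ↑c ∧ W.lastHead = some hv := by
  rcases h with ⟨h1, h2, hK, hT⟩ | ⟨h1, h2, hK, hT⟩ | ⟨h1, h2, hb⟩
  · subst h1; subst h2
    have hmu : ¬ Relation.ReflTransGen E m a := fun hr => acyclic_tg_rtg hE hT hr
    obtain ⟨W, hW, hWl⟩ := pieceHeadM hE hK hmu hc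
    exact ⟨W, hW, hWl⟩
  · subst h1; subst h2
    obtain ⟨W, hW, hWf, hWl⟩ := pieceTail hE hT (hmt rfl) hK hc
    exact ⟨W.reverse, hW.reverse, by rw [lastHead_reverse]; exact hWf⟩
  · subst h1; subst h2
    have hfacts : KCovered E k a m ∧ ¬ Relation.ReflTransGen E m a ∧
        ¬ Relation.ReflTransGen E a m := by
      rcases hb with ⟨hK1, hK2, hn1, hn2⟩ | ⟨hK1, hK2, hn1, hn2⟩
      · exact ⟨hK1, hn2, hn1⟩
      · exact ⟨hK2, hn1, hn2⟩
    obtain ⟨hK, hn1, hn2⟩ := hfacts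
    obtain ⟨W, hW, hWf, hWl⟩ := pieceBothHeads hE hK hn1 hn2 hc
    exact ⟨W, hW, hWl⟩

/-- Piece for the last edge of a cl-path: only the near-end mark mirrored. -/
lemma pieceLeft (hE : Acyclic E) {c : Finset V} (hc : c.card ≤ k) {u m : V} {hu hv : Bool}
    (h : (kClosure E k).step u m hu hv) (hut : hu = false → u ∉ (↑c : Set V)) :
    ∃ W : (ofDAG E).Walk u m, W.DConnecting ↑c ∧ W.firstHead = some hu := by
  rcases h with ⟨h1, h2, hK, hT⟩ | ⟨h1, h2, hK, hT⟩ | ⟨h1, h2, hb⟩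
  · subst h1; subst h2
    obtain ⟨W, hW, hWf, hWl⟩ := pieceTail hE hT (hut rfl) hK hc
    exact ⟨W, hW, hWf⟩
  · subst h1; subst h2
    have hmu : ¬ Relation.ReflTransGen E u m := fun hr => acyclic_tg_rtg hE hT hr
    obtain ⟨W, hW, hWl⟩ := pieceHeadM hE hK hmu hc
    exact ⟨W.reverse, hW.reverse, by rw [firstHead_reverse]; exact hWl⟩
  · subst h1; subst h2
    have hfacts : KCovered E k u m ∧ ¬ Relation.ReflTransGen E m u ∧
        ¬ Relation.ReflTransGen E u m := by
      rcases hb with ⟨hK1, hK2, hn1, hn2⟩ | ⟨hK1, hK2, hn1, hn2⟩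
      · exact ⟨hK1, hn2, hn1⟩
      · exact ⟨hK2, hn1, hn2⟩
    obtain ⟨hK, hn1, hn2⟩ := hfacts
    obtain ⟨W, hW, hWf, hWl⟩ := pieceBothHeads hE hK hn1 hn2 hc
    exact ⟨W, hW, hWf⟩

/-- Transfer of the tail of a connecting cl-walk into a D-walk mirroring the
first mark. -/
lemma transfer_aux (hE : Acyclic E) {c : Finset V} (hc : c.card ≤ k) {b : V} :
    ∀ {u : V} (π : (kClosure E k).Walk u b), π.DConnecting ↑c →
    (π.firstHead = some false → u ∉ (↑c : Set V)) → π.isNil = false →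
    ∃ W : (ofDAG E).Walk u b, W.DConnecting ↑c ∧ W.firstHead = π.firstHead := by
  intro u π
  induction π with
  | nil => intro _ _ hnil; simp at hnil
  | cons hu hv h rest ih =>
      rename_i u₀ m₀ b₀
      intro hπ hut _
      cases rest with
      | nil =>
          obtain ⟨W, hW, hWf⟩ := pieceLeft hE hc h
            (fun hf => hut (by rw [firstHead_cons, hf]))
          exact ⟨W, hW, by rw [firstHead_cons, hWf]⟩
      | cons hu' hv' h' rest' =>
          have hJ := hπ (m₀, hv, hu')
            (by rw [marksInternal_cons_cons]; exact List.mem_cons_self)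
          have hrestval : (Walk.cons hu' hv' h' rest').DConnecting (↑c : Set V) := by
            intro e he
            exact hπ e (by rw [marksInternal_cons_cons]; exact List.mem_cons_of_mem _ he)
          have hmt : hu' = false → m₀ ∉ (↑c : Set V) := by
            intro hf
            refine hJ.2 ?_
            rintro ⟨_, h2⟩
            rw [hf] at h2
            simp at h2
          obtain ⟨W₂, hW₂, hW₂f⟩ := ih hrestval (fun hf => hmt (by simpa using hf)) rfl
          have hvt : hv = false → m₀ ∉ (↑c : Set V) := by
            intro hf
            refine hJ.2 ?_
            rintro ⟨h1, _⟩
            rw [hf] at h1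
            simp at h1
          obtain ⟨W₁, hW₁, hW₁f, hW₁l⟩ := pieceBoth hE hc h
            (fun hf => hut (by rw [firstHead_cons, hf])) hvt
          refine ⟨W₁.append W₂, ?_, ?_⟩
          · refine DConnecting.append hW₁ hW₂ ?_
            intro x' y' hx' hy'
            rw [hW₁l] at hx'
            have hxx : x' = hv := by simpa using hx'.symm
            rw [hW₂f, firstHead_cons] at hy'
            have hyy : y' = hu' := by simpa using hy'.symm
            subst hxx; subst hyy
            constructor
            · intro hcol
              obtain ⟨s, hs1, hs2⟩ := hJ.1 hcol
              exact ⟨s, hs1, anc_cl_to_rtg hs2⟩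
            · exact hJ.2
          · rw [firstHead_append_nonnil _ _ (isNil_false_of_firstHead hW₁f), hW₁f,
              firstHead_cons]

/-- **Transfer theorem**: a conditioning set that d-connects in the k-closure
also d-connects in the DAG. -/
lemma transfer (hE : Acyclic E) {c : Finset V} (hc : c.card ≤ k) {a b : V}
    (h : (kClosure E k).DConn ↑c a b) : (ofDAG E).DConn ↑c a b := by
  obtain ⟨π, hπpath, hπval⟩ := h
  cases π with
  | nil =>
      exact ⟨Walk.nil a, by simp [Walk.IsPath], fun e he => by simp at he⟩
  | cons hu hv h rest =>
      rename_i m₀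
      cases rest with
      | nil =>
          rcases h with ⟨_, _, hK, _⟩ | ⟨_, _, hK, _⟩ | ⟨_, _, hb⟩
          · exact not_not.mp (hK c hc)
          · exact dconn_symm (not_not.mp (hK c hc))
          · rcases hb with ⟨hK1, _, _, _⟩ | ⟨hK1, _, _, _⟩
            · exact not_not.mp (hK1 c hc)
            · exact dconn_symm (not_not.mp (hK1 c hc))
      | cons hu' hv' h' rest' =>
          have hJ := hπval (m₀, hv, hu')
            (by rw [marksInternal_cons_cons]; exact List.mem_cons_self)
          have hrestval : (Walk.cons hu' hv' h' rest').DConnecting (↑c : Set V) := by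
            intro e he
            exact hπval e (by rw [marksInternal_cons_cons]; exact List.mem_cons_of_mem _ he)
          have hmt : hu' = false → m₀ ∉ (↑c : Set V) := by
            intro hf
            refine hJ.2 ?_
            rintro ⟨_, h2⟩
            rw [hf] at h2
            simp at h2
          obtain ⟨W₂, hW₂, hW₂f⟩ := transfer_aux hE hc (Walk.cons hu' hv' h' rest')
            hrestval (fun hf => hmt (by simpa using hf)) rfl
          have hvt : hv = false → m₀ ∉ (↑c : Set V) := by
            intro hf
            refine hJ.2 ?_
            rintro ⟨h1, _⟩
            rw [hf] at h1
            simp at h1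
          obtain ⟨W₁, hW₁, hW₁l⟩ := pieceRight hE hc h hvt
          have hWvalid : (W₁.append W₂).DConnecting (↑c : Set V) := by
            refine DConnecting.append hW₁ hW₂ ?_
            intro x' y' hx' hy'
            rw [hW₁l] at hx'
            have hxx : x' = hv := by simpa using hx'.symm
            rw [hW₂f, firstHead_cons] at hy'
            have hyy : y' = hu' := by simpa using hy'.symm
            subst hxx; subst hyy
            constructor
            · intro hcol
              obtain ⟨s, hs1, hs2⟩ := hJ.1 hcol
              exact ⟨s, hs1, anc_cl_to_rtg hs2⟩
            · exact hJ.2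
          exact walk_to_path hE ↑c (W₁.append W₂).length _ le_rfl hWvalid

end Transfer

/-- in a `k`-closure graph, two distinct nodes are non-adjacent iff
they are d-separated by some set. -/
theorem kClosure_nonadj_iff_dsep {V : Type} (E : V → V → Prop) (hE : Acyclic E)
    (k : ℕ) (a b : V) (hab : a ≠ b) :
    ¬ (kClosure E k).Adj a b ↔ ∃ S : Set V, (kClosure E k).DSep S a b := by
  classical
  constructor
  · intro hnadj
    have hnk : ¬ KCovered E k a b ∨ ¬ KCovered E k b a := by
      by_contra hcon
      push_neg at hcon
      obtain ⟨hK1, hK2⟩ := hcon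
      apply hnadj
      by_cases h1 : Relation.TransGen E a b
      · exact Or.inl ⟨hK1, h1⟩
      · by_cases h2 : Relation.TransGen E b a
        · exact Or.inr (Or.inl ⟨hK2, h2⟩)
        · refine Or.inr (Or.inr (Or.inl ⟨hK1, hK2, ?_, ?_⟩))
          · intro hr
            rcases rtg_cases hr with heq | htg
            · exact hab heq
            · exact h1 htg
          · intro hr
            rcases rtg_cases hr with heq | htg
            · exact hab heq.symm
            · exact h2 htg
    rcases hnk with hnk | hnk
    · unfold KCovered at hnk
      push_neg at hnk
      obtain ⟨c, hcard, hd⟩ := hnk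
      exact ⟨↑c, fun hconn => hd (transfer hE hcard hconn)⟩
    · unfold KCovered at hnk
      push_neg at hnk
      obtain ⟨c, hcard, hd⟩ := hnk
      exact ⟨↑c, fun hconn => hd (transfer hE hcard (MixedGraph.Walk.dconn_symm hconn))⟩
  · rintro ⟨S, hS⟩ hadj
    apply hS
    rcases hadj with h | h | h
    · exact ⟨MixedGraph.Walk.single (Or.inl ⟨rfl, rfl, h⟩),
        by simp [MixedGraph.Walk.IsPath, MixedGraph.Walk.single, MixedGraph.Walk.support, hab],
        fun e he => by simp [MixedGraph.Walk.single, MixedGraph.Walk.marksInternal] at he⟩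
    · exact ⟨MixedGraph.Walk.single (Or.inr (Or.inl ⟨rfl, rfl, h⟩)),
        by simp [MixedGraph.Walk.IsPath, MixedGraph.Walk.single, MixedGraph.Walk.support, hab],
        fun e he => by simp [MixedGraph.Walk.single, MixedGraph.Walk.marksInternal] at he⟩
    · exact ⟨MixedGraph.Walk.single (Or.inr (Or.inr ⟨rfl, rfl, h⟩)),
        by simp [MixedGraph.Walk.IsPath, MixedGraph.Walk.single, MixedGraph.Walk.support, hab],
        fun e he => by simp [MixedGraph.Walk.single, MixedGraph.Walk.marksInternal] at he⟩
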